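/- arXiv:0809.2214 — 3 statements merged into one kernel-verified Lean document; each statement's English description precedes it below -/
import Mathlib

section
/- Let T be a relation representing R, and define the sequence T_0 = T ∪ Id and T_{n} = (T_{n-1} ∘ T^{2^{n-1}}) ∪ T_{n-1} for n ≥ 1, where T^{2^{n-1}} denotes the 2^{n-1}-fold composition of T. Then T_n = (T ∪ Id)^{2^n} for all n ≥ 0. (Correctness of the nonreflexive-composition optimization for exponential sampling.) -/
/-!
(T ∪ Id)^m relates exactly the pairs joined by a T-path of length at most m. The pairs
reached within 2^n steps, followed by exactly 2^n further steps, give path lengths in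
[2^n, 2^(n+1)]; together with the lengths ≤ 2^n this is every length ≤ 2^(n+1).
-/

/-- `relPow R n` is the `n`-fold relational composition of `R`, with `relPow R 0 = Id`. -/
def relPow {α : Type*} (R : α → α → Prop) : ℕ → α → α → Prop
  | 0 => Eq
  | n + 1 => fun a c => ∃ b, relPow R n a b ∧ R b c

section

variable {α : Type*} (R : α → α → Prop)

theorem relPow_one : relPow R 1 = R := by
  funext a b
  simp [relPow]

theorem relPow_add (m n : ℕ) (a b : α) :
    relPow R (m + n) a b ↔ ∃ c, relPow R m a c ∧ relPow R n c b := by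
  induction n generalizing b with
  | zero => simp [relPow]
  | succ n ih =>
    constructor
    · rintro ⟨c, hac, hcb⟩
      obtain ⟨d, had, hdc⟩ := (ih c).1 hac
      exact ⟨d, had, c, hdc, hcb⟩
    · rintro ⟨d, had, c, hdc, hcb⟩
      exact ⟨c, (ih c).2 ⟨d, had, hdc⟩, hcb⟩

theorem exists_relPow_le_add_iff {m n : ℕ} (hnm : n ≤ m + 1) (a b : α) :
    ((∃ c, (∃ k ≤ m, relPow R k a c) ∧ relPow R n c b) ∨ ∃ k ≤ m, relPow R k a b) ↔
      ∃ k ≤ m + n, relPow R k a b := by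
  constructor
  · rintro (⟨c, ⟨k, hk, hac⟩, hcb⟩ | ⟨k, hk, hab⟩)
    · exact ⟨k + n, by omega, (relPow_add R k n a b).2 ⟨c, hac, hcb⟩⟩
    · exact ⟨k, by omega, hab⟩
  · rintro ⟨k, hk, hab⟩
    by_cases hkm : k ≤ m
    · exact Or.inr ⟨k, hkm, hab⟩
    · obtain ⟨j, rfl⟩ : ∃ j, k = j + n := ⟨k - n, by omega⟩
      obtain ⟨c, hac, hcb⟩ := (relPow_add R j n a b).1 hab
      exact Or.inl ⟨c, ⟨j, by omega, hac⟩, hcb⟩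

theorem relPow_or_eq_iff (m : ℕ) (a b : α) :
    relPow (fun a b => R a b ∨ a = b) m a b ↔ ∃ k ≤ m, relPow R k a b := by
  induction m generalizing b with
  | zero => simp [relPow]
  | succ m ih =>
    rw [← exists_relPow_le_add_iff R (Nat.le_add_left 1 m), relPow_one]
    simp only [relPow, ih, and_or_left, exists_or, exists_eq_right]

end

theorem stmt_7 {σ : Type*} (T : List σ → List σ → Prop)
    (S : ℕ → List σ → List σ → Prop)
    (h0 : S 0 = fun a b => T a b ∨ a = b)
    (hstep : ∀ n, S (n + 1) =
      fun a b => (∃ c, S n a c ∧ relPow T (2 ^ n) c b) ∨ S n a b) :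
    ∀ n, S n = relPow (fun a b => T a b ∨ a = b) (2 ^ n) := by
  intro n
  induction n with
  | zero => rw [h0, pow_zero, relPow_one]
  | succ n ih =>
    funext a b
    rw [hstep, ih, pow_succ, mul_two]
    simp only [relPow_or_eq_iff]
    exact propext (exists_relPow_le_add_iff T (Nat.le_succ_of_le le_rfl) a b)
end

section
/- If a Büchi automaton A is inherently weak — no reachable strongly connected component of its transition graph contains both a cycle visiting an accepting state and a cycle visiting no accepting state — then there exists a weak Büchi automaton (with the same transition structure but possibly modified acceptance set, making each strongly connected component uniformly accepting or rejecting) accepting the same ω-language. -/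
/-
Replace `F` by the set of states whose strongly connected component contains an accepting
cycle; this acceptance set is constant on components. A run that visits `F` infinitely often
visits some accepting state `q` infinitely often, and the run segment between two visits is an
accepting cycle through `q`, so the run also visits the new set infinitely often. Conversely, if
a run eventually avoids `F` but visits the new set infinitely often, some state `q` of the new
set is visited infinitely often after that point; the segment between two visits is a cycle
avoiding `F` in the (reachable) component of `q`, which also contains an accepting cycle,
contradicting inherent weakness.
-/

/-- Edge relation of the transition graph of a nondeterministic automaton. -/
def nedge {α σ : Type*} (step : σ → α → Set σ) (q q' : σ) : Prop := ∃ a, q' ∈ step q a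

/-- Büchi acceptance: some run visits `F` infinitely often. -/
def BuchiAccepts {α σ : Type*} (step : σ → α → Set σ) (q0 : σ) (F : Set σ)
    (w : ℕ → α) : Prop :=
  ∃ r : ℕ → σ, r 0 = q0 ∧ (∀ n, r (n + 1) ∈ step (r n) (w n)) ∧
    ∀ N, ∃ n ≥ N, r n ∈ F

open Filter Relation

section Sequences

variable {σ : Type*}

lemma exists_frequently_eq_of_frequently_mem [Finite σ] {r : ℕ → σ} {S : Set σ}
    (h : ∃ᶠ n in atTop, r n ∈ S) : ∃ q ∈ S, ∃ᶠ n in atTop, r n = q :=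
  S.toFinite.frequently_exists.1 (h.mono fun n hn => ⟨r n, hn, rfl⟩)

lemma transGen_self_of_frequently_eq {R : σ → σ → Prop} {r : ℕ → σ} {N : ℕ} {q : σ}
    (hR : ∀ n, N ≤ n → R (r n) (r (n + 1))) (hq : ∃ᶠ n in atTop, r n = q) :
    TransGen R q q := by
  obtain ⟨m, hm, rfl⟩ := frequently_atTop.1 hq N
  obtain ⟨n, hn, hnq⟩ := frequently_atTop.1 hq (m + 1)
  simpa only [hnq] using
    Nat.rel_of_forall_rel_succ_of_le_of_lt (TransGen R) (fun k hk => .single (hR k hk)) hm hn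

end Sequences

section Automata

variable {α σ : Type*} (step : σ → α → Set σ)

def acceptingSCCStates (F : Set σ) : Set σ :=
  {q | ∃ p, ReflTransGen (nedge step) q p ∧ ReflTransGen (nedge step) p q ∧
    p ∈ F ∧ TransGen (nedge step) p p}

def IsInherentlyWeak (q0 : σ) (F : Set σ) : Prop :=
  ¬ ∃ q, ReflTransGen (nedge step) q0 q ∧
    (∃ p, ReflTransGen (nedge step) q p ∧ ReflTransGen (nedge step) p q ∧
      p ∈ F ∧ TransGen (nedge step) p p) ∧
    (∃ p, ReflTransGen (nedge step) q p ∧ ReflTransGen (nedge step) p q ∧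
      p ∉ F ∧ TransGen (fun x y => x ∉ F ∧ y ∉ F ∧ nedge step x y) p p)

variable {step}

lemma mem_acceptingSCCStates_congr {F : Set σ} {q q' : σ}
    (h : ReflTransGen (nedge step) q q') (h' : ReflTransGen (nedge step) q' q) :
    q ∈ acceptingSCCStates step F ↔ q' ∈ acceptingSCCStates step F :=
  ⟨fun ⟨p, hqp, hpq, hpF, hp⟩ => ⟨p, h'.trans hqp, hpq.trans h, hpF, hp⟩,
    fun ⟨p, hqp, hpq, hpF, hp⟩ => ⟨p, h.trans hqp, hpq.trans h', hpF, hp⟩⟩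

lemma reflTransGen_of_run {w : ℕ → α} {r : ℕ → σ}
    (hr : ∀ n, r (n + 1) ∈ step (r n) (w n)) (n : ℕ) : ReflTransGen (nedge step) (r 0) (r n) :=
  Nat.rel_of_forall_rel_succ_of_le _ (fun k => .single ⟨w k, hr k⟩) n.zero_le

variable [Finite σ] {q0 : σ} {F : Set σ} {w : ℕ → α}

lemma buchiAccepts_acceptingSCCStates_of_buchiAccepts (h : BuchiAccepts step q0 F w) :
    BuchiAccepts step q0 (acceptingSCCStates step F) w := by
  obtain ⟨r, hr0, hr, hF⟩ := h
  obtain ⟨q, hqF, hq⟩ := exists_frequently_eq_of_frequently_mem (frequently_atTop.2 hF)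
  have hcycle : TransGen (nedge step) q q :=
    transGen_self_of_frequently_eq (N := 0) (fun n _ => ⟨w n, hr n⟩) hq
  exact ⟨r, hr0, hr, frequently_atTop.1 <|
    hq.mono fun n hn => hn ▸ ⟨q, .refl, .refl, hqF, hcycle⟩⟩

lemma buchiAccepts_of_buchiAccepts_acceptingSCCStates (hweak : IsInherentlyWeak step q0 F)
    (h : BuchiAccepts step q0 (acceptingSCCStates step F) w) : BuchiAccepts step q0 F w := by
  obtain ⟨r, hr0, hr, hW⟩ := h
  refine ⟨r, hr0, hr, frequently_atTop.1 ?_⟩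
  by_contra hF
  obtain ⟨N, hN⟩ := eventually_atTop.1 (not_frequently.1 hF)
  obtain ⟨q, hqW, hq⟩ := exists_frequently_eq_of_frequently_mem (frequently_atTop.2 hW)
  have hcycle : TransGen (fun x y => x ∉ F ∧ y ∉ F ∧ nedge step x y) q q :=
    transGen_self_of_frequently_eq (fun n hn => ⟨hN n hn, hN (n + 1) (by omega), w n, hr n⟩) hq
  obtain ⟨n, hn, rfl⟩ := frequently_atTop.1 hq N
  exact hweak ⟨r n, hr0 ▸ reflTransGen_of_run hr n, hqW, r n, .refl, .refl, hN n hn, hcycle⟩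

end Automata

/-- If a Büchi automaton is inherently weak — no reachable strongly connected
component contains both an accepting cycle and a cycle avoiding all accepting
states — then some weak acceptance set `F'` (constant on each strongly connected
component) yields the same ω-language with the same transition structure. -/
theorem stmt_15 {α σ : Type*} [Fintype σ] (step : σ → α → Set σ) (q0 : σ) (F : Set σ)
    (hinw : ¬ ∃ q, Relation.ReflTransGen (nedge step) q0 q ∧
      (∃ p, Relation.ReflTransGen (nedge step) q p ∧
        Relation.ReflTransGen (nedge step) p q ∧
        p ∈ F ∧ Relation.TransGen (nedge step) p p) ∧
      (∃ p, Relation.ReflTransGen (nedge step) q p ∧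
        Relation.ReflTransGen (nedge step) p q ∧
        p ∉ F ∧ Relation.TransGen (fun x y => x ∉ F ∧ y ∉ F ∧ nedge step x y) p p)) :
    ∃ F' : Set σ,
      (∀ q q', Relation.ReflTransGen (nedge step) q q' →
        Relation.ReflTransGen (nedge step) q' q → (q ∈ F' ↔ q' ∈ F'))
      ∧ ∀ w, BuchiAccepts step q0 F w ↔ BuchiAccepts step q0 F' w :=
  ⟨acceptingSCCStates step F, fun _ _ => mem_acceptingSCCStates_congr,
    fun _ => ⟨buchiAccepts_acceptingSCCStates_of_buchiAccepts,
      buchiAccepts_of_buchiAccepts_acceptingSCCStates hinw⟩⟩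
end

section
/- Let A^{e_0} be the last automaton of an incrementally growing sequence with increments Q_{I_0},...,Q_{I_{k-1}} that are pairwise communication equivalent, and let A^{e_*} be obtained by the finite-word extrapolation construction: for each state q in Q_H ∪ Q_{I_0} and letter a, if δ(q,a) lands in increment Q_{I_j} with 1 ≤ j ≤ k−1, add for every 0 ≤ ℓ < j a transition on a from q to the state corresponding (under the increment isomorphism) to δ(q,a) in Q_{I_ℓ}. Then L(A^{e_*}) = ⋃_{i≥0} L(A^{e_i}), where A^{e_i} is the automaton obtained from A^{e_0} by inserting i additional copies of the increment (each communication equivalent to Q_{I_0}) between the head part and Q_{I_0}. -/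
/-!  Abstract model of an incrementally growing family of deterministic
(partial) automata and of the finite-word extrapolation construction.

States of each automaton are partitioned into a head part `H`, a number of
isomorphic copies of an increment `I` (indexed by their distance `ℓ` from the
head part), and a tail-end part `T`.  All increment copies are communication
equivalent: their outgoing transitions are given uniformly by `δI`, which for
each increment state and letter is undefined, or goes `γ` increments further
down (to a corresponding state, `γ = 0` meaning within the same increment), or
goes to a fixed tail-end state.  The head part is communication stable: its
transitions `δH` stay in the head, or go to the increment of a fixed index `j`,
or to the tail end; tail-end transitions `δT` stay in the tail end. -/

/-- States of an automaton of the family: head, `(index, increment-state)`, or tail. -/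
abbrev IncSt (H I T : Type) := H ⊕ (ℕ × I) ⊕ T

/-- The (partial, deterministic) transition function of the automaton `A^{e_i}`
having `m` increments. -/
def incStep {A H I T : Type} (δH : H → A → Option (IncSt H I T))
    (δI : I → A → Option ((ℕ × I) ⊕ T)) (δT : T → A → Option T) (m : ℕ) :
    IncSt H I T → A → Option (IncSt H I T)
  | Sum.inl h, a =>
      match δH h a with
      | none => none
      | some (Sum.inl h') => some (Sum.inl h')
      | some (Sum.inr (Sum.inl (j, x))) =>
          if j < m then some (Sum.inr (Sum.inl (j, x))) else none
      | some (Sum.inr (Sum.inr t)) => some (Sum.inr (Sum.inr t))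
  | Sum.inr (Sum.inl (ℓ, x)), a =>
      match δI x a with
      | none => none
      | some (Sum.inl (γ, y)) =>
          if ℓ + γ < m then some (Sum.inr (Sum.inl (ℓ + γ, y))) else none
      | some (Sum.inr t) => some (Sum.inr (Sum.inr t))
  | Sum.inr (Sum.inr t), a => (δT t a).map (fun t' => Sum.inr (Sum.inr t'))

/-- Deterministic partial evaluation of a word. -/
def evalD {A S : Type} (step : S → A → Option S) : S → List A → Option S
  | s, [] => some s
  | s, a :: w =>
      match step s a with
      | none => none
      | some s' => evalD step s' w

/-- Acceptance condition: accepting states are uniform over increment copies. -/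
def incAccept {H I T : Type} (FH : Set H) (FI : Set I) (FT : Set T) :
    IncSt H I T → Prop
  | Sum.inl h => h ∈ FH
  | Sum.inr (Sum.inl (_, x)) => x ∈ FI
  | Sum.inr (Sum.inr t) => t ∈ FT

/-- Language of the automaton `A^{e_i}`, obtained from `A^{e_0}` (which has `k`
increments) by inserting `i` additional communication-equivalent copies of the
increment between the head part and `Q_{I_0}`. -/
def incLang {A H I T : Type} (δH : H → A → Option (IncSt H I T))
    (δI : I → A → Option ((ℕ × I) ⊕ T)) (δT : T → A → Option T)
    (FH : Set H) (FI : Set I) (FT : Set T) (h0 : H) (m : ℕ) : Set (List A) :=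
  {w | ∃ s, evalD (incStep δH δI δT m) (Sum.inl h0) w = some s ∧ incAccept FH FI FT s}

/-- The (nondeterministic) transition relation of the extrapolated automaton
`A^{e_*}`: all transitions of `A^{e_0}` (with its `k` increments), plus, for
every state `q` of `Q_H ∪ Q_{I_0}` and letter `a` such that `δ(q,a)` lands in
increment `Q_{I_j}` with `1 ≤ j ≤ k - 1`, a transition from `q` on `a` to the
corresponding state of `Q_{I_ℓ}` for every `0 ≤ ℓ < j`. -/
def starStep {A H I T : Type} (δH : H → A → Option (IncSt H I T))
    (δI : I → A → Option ((ℕ × I) ⊕ T)) (δT : T → A → Option T) (k : ℕ) :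
    IncSt H I T → A → Set (IncSt H I T) :=
  fun s a =>
    {s' | incStep δH δI δT k s a = some s'} ∪
      match s with
      | Sum.inl h =>
          {s' | ∃ j x, δH h a = some (Sum.inr (Sum.inl (j, x))) ∧ 1 ≤ j ∧ j < k ∧
            ∃ ℓ < j, s' = Sum.inr (Sum.inl (ℓ, x))}
      | Sum.inr (Sum.inl (0, x)) =>
          {s' | ∃ γ y, δI x a = some (Sum.inl (γ, y)) ∧ 1 ≤ γ ∧ γ < k ∧
            ∃ ℓ < γ, s' = Sum.inr (Sum.inl (ℓ, y))}
      | _ => ∅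

/-- Nondeterministic evaluation. -/
def evalN {A S : Type} (step : S → A → Set S) : S → List A → Set S
  | s, [] => {s}
  | s, a :: w => ⋃ s' ∈ step s a, evalN step s' w

/-!
A run of `A^{e_*}` is shadowed by a run of the unextrapolated automaton that visits the same
states, except that it may sit in a deeper increment copy: where `A^{e_*}` takes a shortcut
into `Q_{I_ℓ}`, the shadow takes the original transition into `Q_{I_j}`, `j ≥ ℓ`, and since all
copies are communication equivalent the two runs stay in step. The shadow only visits finitely
many copies, so it is a run of `A^{e_i}` for `i` large. Conversely, collapsing the first `i + 1`
copies of `A^{e_i}` onto `Q_{I_0}` maps its runs to runs of `A^{e_*}`: a transition out of the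
collapsed block becomes an original transition or one of the added shortcuts.
-/

section Runs

variable {A S S' : Type}

theorem evalD_cons_eq_some_iff {step : S → A → Option S} {s t : S} {a : A} {w : List A} :
    evalD step s (a :: w) = some t ↔ ∃ s₁, step s a = some s₁ ∧ evalD step s₁ w = some t := by
  simp only [evalD]
  split <;> simp_all

theorem evalD_mono {step step' : S → A → Option S}
    (hstep : ∀ s a s₁, step s a = some s₁ → step' s a = some s₁) :
    ∀ {w : List A} {s t : S}, evalD step s w = some t → evalD step' s w = some t
  | [], _, _, h => h
  | _ :: _, _, _, h => by
    obtain ⟨s₁, hs₁, hrun⟩ := evalD_cons_eq_some_iff.1 h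
    exact evalD_cons_eq_some_iff.2 ⟨s₁, hstep _ _ _ hs₁, evalD_mono hstep hrun⟩

theorem mem_evalN_of_evalD_eq_some {step : S → A → Option S} {nstep : S' → A → Set S'}
    (f : S → S') (hf : ∀ s a s₁, step s a = some s₁ → f s₁ ∈ nstep (f s) a) :
    ∀ {w : List A} {s t : S}, evalD step s w = some t → f t ∈ evalN nstep (f s) w
  | [], _, _, h => by cases h; exact Set.mem_singleton _
  | _ :: _, _, _, h => by
    obtain ⟨s₁, hs₁, hrun⟩ := evalD_cons_eq_some_iff.1 h
    exact Set.mem_biUnion (hf _ _ _ hs₁) (mem_evalN_of_evalD_eq_some f hf hrun)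

theorem exists_evalD_of_mem_evalN {step : ℕ → S → A → Option S} {nstep : S' → A → Set S'}
    {R : S' → S → Prop}
    (hmono : ∀ {m m'}, m ≤ m' → ∀ s a s₁, step m s a = some s₁ → step m' s a = some s₁)
    (hsim : ∀ {s' s a s₁'}, R s' s → s₁' ∈ nstep s' a →
      ∃ s₁, R s₁' s₁ ∧ ∃ m, step m s a = some s₁) :
    ∀ {w : List A} {s' t' : S'} {s : S}, R s' s → t' ∈ evalN nstep s' w →
      ∃ t, R t' t ∧ ∃ m, evalD (step m) s w = some t
  | [], _, _, s, hr, ht' => by cases ht'; exact ⟨s, hr, 0, rfl⟩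
  | _ :: _, _, _, _, hr, ht' => by
    obtain ⟨s₁', hs₁', ht'⟩ := Set.mem_iUnion₂.1 ht'
    obtain ⟨s₁, hr₁, m₁, hstep⟩ := hsim hr hs₁'
    obtain ⟨t, hrt, m, hrun⟩ := exists_evalD_of_mem_evalN hmono hsim hr₁ ht'
    exact ⟨t, hrt, max m₁ m, evalD_cons_eq_some_iff.2
      ⟨s₁, hmono (le_max_left _ _) _ _ _ hstep, evalD_mono (hmono (le_max_right _ _)) hrun⟩⟩

end Runs

section Extrapolation

variable {A H I T : Type} {δH : H → A → Option (IncSt H I T)}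
  {δI : I → A → Option ((ℕ × I) ⊕ T)} {δT : T → A → Option T}
  {FH : Set H} {FI : Set I} {FT : Set T}

theorem incStep_mono {m m' : ℕ} (hm : m ≤ m') (s : IncSt H I T) (a : A) (s₁ : IncSt H I T)
    (h : incStep δH δI δT m s a = some s₁) : incStep δH δI δT m' s a = some s₁ := by
  rcases s with h₀ | ⟨ℓ, x⟩ | t
  · rcases hδ : δH h₀ a with _ | _ | ⟨j, x⟩ | _ <;> simp only [incStep, hδ] at h ⊢ <;> try exact h
    grind
  · rcases hδ : δI x a with _ | ⟨γ, y⟩ | _ <;> simp only [incStep, hδ] at h ⊢ <;> try exact h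
    grind
  · exact h

inductive IndexLE : IncSt H I T → IncSt H I T → Prop
  | head (h : H) : IndexLE (Sum.inl h) (Sum.inl h)
  | inc {ℓ' ℓ : ℕ} (x : I) : ℓ' ≤ ℓ → IndexLE (Sum.inr (Sum.inl (ℓ', x))) (Sum.inr (Sum.inl (ℓ, x)))
  | tail (t : T) : IndexLE (Sum.inr (Sum.inr t)) (Sum.inr (Sum.inr t))

theorem IndexLE.refl : ∀ s : IncSt H I T, IndexLE s s
  | Sum.inl h => .head h
  | Sum.inr (Sum.inl (_, x)) => .inc x le_rfl
  | Sum.inr (Sum.inr t) => .tail t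

theorem IndexLE.incAccept {s' s : IncSt H I T} (hr : IndexLE s' s)
    (h : incAccept FH FI FT s') : incAccept FH FI FT s := by
  cases hr <;> exact h

/-- A shortcut to `Q_{I_ℓ}` is matched by the original transition, to a deeper copy. -/
theorem IndexLE.exists_incStep {k : ℕ} {s' s s₁' : IncSt H I T} {a : A} (hr : IndexLE s' s)
    (hs₁' : s₁' ∈ starStep δH δI δT k s' a) :
    ∃ s₁, IndexLE s₁' s₁ ∧ ∃ m, incStep δH δI δT m s a = some s₁ := by
  rcases hs₁' with (hdet : incStep δH δI δT k s' a = some s₁') | hshort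
  · cases hr with
    | head h => exact ⟨s₁', .refl _, k, hdet⟩
    | tail t => exact ⟨s₁', .refl _, k, hdet⟩
    | @inc ℓ' ℓ x hle =>
      rcases hδ : δI x a with _ | ⟨γ, y⟩ | t <;> simp only [incStep, hδ, reduceCtorEq,
        Option.ite_none_right_eq_some, Option.some.injEq] at hdet
      · obtain ⟨-, rfl⟩ := hdet
        exact ⟨_, .inc y (Nat.add_le_add_right hle γ), ℓ + γ + 1, by simp [incStep, hδ]⟩
      · subst hdet
        exact ⟨_, .refl _, 0, by simp [incStep, hδ]⟩
  · cases hr with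
    | head h =>
      obtain ⟨j, x, hδ, -, -, ℓ, hℓ, rfl⟩ := hshort
      exact ⟨_, .inc x hℓ.le, j + 1, by simp [incStep, hδ]⟩
    | @inc ℓ' ℓ x hle =>
      obtain rfl : ℓ' = 0 := by rcases ℓ' with _ | _ <;> simp_all
      obtain ⟨γ, y, hδ, -, -, ℓ₀, hℓ₀, rfl⟩ := hshort
      exact ⟨_, .inc y (by omega : ℓ₀ ≤ ℓ + γ), ℓ + γ + 1, by simp [incStep, hδ]⟩
    | tail t => simp at hshort

theorem mem_starStep_head {k j ℓ : ℕ} {h : H} {a : A} {x : I} (hj : j < k)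
    (hδ : δH h a = some (Sum.inr (Sum.inl (j, x)))) (hℓ : ℓ ≤ j) :
    Sum.inr (Sum.inl (ℓ, x)) ∈ starStep δH δI δT k (Sum.inl h) a := by
  rcases hℓ.lt_or_eq with hlt | rfl
  · exact Or.inr ⟨j, x, hδ, by omega, hj, ℓ, hlt, rfl⟩
  · exact Or.inl (by simp [incStep, hδ, hj])

theorem mem_starStep_zero {k γ ℓ : ℕ} {x y : I} {a : A} (hγ : γ < k)
    (hδ : δI x a = some (Sum.inl (γ, y))) (hℓ : ℓ ≤ γ) :
    Sum.inr (Sum.inl (ℓ, y)) ∈ starStep δH δI δT k (Sum.inr (Sum.inl (0, x))) a := by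
  rcases hℓ.lt_or_eq with hlt | rfl
  · exact Or.inr ⟨γ, y, hδ, by omega, hγ, ℓ, hlt, rfl⟩
  · exact Or.inl (by simp [incStep, hδ, hγ])

/-- Merges the first `D + 1` increment copies into `Q_{I_0}`. -/
def IncSt.collapse (D : ℕ) : IncSt H I T → IncSt H I T
  | Sum.inr (Sum.inl (ℓ, x)) => Sum.inr (Sum.inl (ℓ - D, x))
  | s => s

theorem incAccept_collapse (D : ℕ) (s : IncSt H I T) :
    incAccept FH FI FT (s.collapse D) ↔ incAccept FH FI FT s := by
  rcases s with _ | ⟨_, _⟩ | _ <;> rfl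

theorem collapse_mem_starStep {k D : ℕ}
    (hδH : ∀ h a j x, δH h a = some (Sum.inr (Sum.inl (j, x))) → j < k)
    (hδI : ∀ x a γ y, δI x a = some (Sum.inl (γ, y)) → γ < k)
    {s s₁ : IncSt H I T} {a : A} (h : incStep δH δI δT (k + D) s a = some s₁) :
    s₁.collapse D ∈ starStep δH δI δT k (s.collapse D) a := by
  rcases s with h₀ | ⟨ℓ, x⟩ | t
  · rcases hδ : δH h₀ a with _ | h' | ⟨j, x⟩ | t <;>
      simp only [incStep, hδ, reduceCtorEq, Option.ite_none_right_eq_some, Option.some.injEq] at h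
    · exact Or.inl (by simp [← h, IncSt.collapse, incStep, hδ])
    · obtain ⟨-, rfl⟩ := h
      exact mem_starStep_head (hδH _ _ _ _ hδ) hδ (Nat.sub_le j D)
    · exact Or.inl (by simp [← h, IncSt.collapse, incStep, hδ])
  · rcases hδ : δI x a with _ | ⟨γ, y⟩ | t <;>
      simp only [incStep, hδ, reduceCtorEq, Option.ite_none_right_eq_some, Option.some.injEq] at h
    · obtain ⟨hlt, rfl⟩ := h
      by_cases hD : D ≤ ℓ
      · have hidx : ℓ + γ - D = ℓ - D + γ := by omega
        refine Or.inl ?_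
        simp only [IncSt.collapse, Set.mem_ofPred_eq, incStep, hδ, hidx]
        exact if_pos (by omega)
      · obtain hℓ : ℓ - D = 0 := by omega
        simp only [IncSt.collapse, hℓ]
        exact mem_starStep_zero (hδI _ _ _ _ hδ) hδ (by omega)
    · exact Or.inl (by simp [← h, IncSt.collapse, incStep, hδ])
  · rcases hδ : δT t a with _ | t' <;>
      simp only [incStep, hδ, reduceCtorEq, Option.map_none, Option.map_some,
        Option.some.injEq] at h
    exact Or.inl (by simp [← h, IncSt.collapse, incStep, hδ])

end Extrapolation

theorem stmt_19_general {A H I T : Type}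
    (δH : H → A → Option (IncSt H I T))
    (δI : I → A → Option ((ℕ × I) ⊕ T)) (δT : T → A → Option T)
    (FH : Set H) (FI : Set I) (FT : Set T) (h0 : H) (k : ℕ)
    -- well-formedness of `A^{e_0}`: head transitions and increment offsets fit
    -- within its `k` increments
    (hδH : ∀ h a j x, δH h a = some (Sum.inr (Sum.inl (j, x))) → j < k)
    (hδI : ∀ x a γ y, δI x a = some (Sum.inl (γ, y)) → γ < k) :
    {w | ∃ s ∈ evalN (starStep δH δI δT k) (Sum.inl h0) w, incAccept FH FI FT s}
      = ⋃ i : ℕ, incLang δH δI δT FH FI FT h0 (k + i) := by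
  ext w
  simp only [incLang, Set.mem_ofPred_eq, Set.mem_iUnion]
  constructor
  · rintro ⟨t', ht', hacc⟩
    obtain ⟨t, hr, m, hrun⟩ :=
      exists_evalD_of_mem_evalN (R := IndexLE) (fun hm => incStep_mono hm)
        IndexLE.exists_incStep (.refl _) ht'
    exact ⟨m, t, evalD_mono (incStep_mono (by omega)) hrun, hr.incAccept hacc⟩
  · rintro ⟨i, t, hrun, hacc⟩
    exact ⟨t.collapse i,
      mem_evalN_of_evalD_eq_some _ (fun _ _ _ => collapse_mem_starStep hδH hδI) hrun,
      (incAccept_collapse i t).2 hacc⟩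

/-- The extrapolated automaton accepts exactly the union of the languages of
the automata `A^{e_i}` of the extrapolated sequence. -/
theorem stmt_19 {A H I T : Type}
    (δH : H → A → Option (IncSt H I T))
    (δI : I → A → Option ((ℕ × I) ⊕ T)) (δT : T → A → Option T)
    (FH : Set H) (FI : Set I) (FT : Set T) (h0 : H) (k : ℕ) (hk : 1 ≤ k)
    -- well-formedness of `A^{e_0}`: head transitions and increment offsets fit
    -- within its `k` increments
    (hδH : ∀ h a j x, δH h a = some (Sum.inr (Sum.inl (j, x))) → j < k)
    (hδI : ∀ x a γ y, δI x a = some (Sum.inl (γ, y)) → γ < k) :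
    {w | ∃ s ∈ evalN (starStep δH δI δT k) (Sum.inl h0) w, incAccept FH FI FT s}
      = ⋃ i : ℕ, incLang δH δI δT FH FI FT h0 (k + i) :=
  stmt_19_general δH δI δT FH FI FT h0 k hδH hδI
end
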